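/- Let X be a locally compact, σ-compact metrizable topological space (so that its one-point compactification X' = X ∪ {p} is a compact metrizable space), and let φ be an action of a group G on X. Let φ' be the extension of φ to X' defined by g·p = p for all g ∈ G. Then φ is metric-independent expansive (MIE) if and only if φ' is expansive with respect to some (equivalently, every) metric compatible with the topology of X'. -/

import Mathlib

/-- An action `φ` is expansive with respect to a distance function `d`. -/
def ExpansiveWith {G X : Type*} (φ : G → X → X) (d : X → X → ℝ) : Prop :=
  ∃ c > 0, ∀ x y : X, x ≠ y → ∃ g : G, c < d (φ g x) (φ g y)

/-- Metric-independent expansiveness: expansive with respect to every metric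
compatible with the topology. -/
def MIE {G X : Type*} [tX : TopologicalSpace X] (φ : G → X → X) : Prop :=
  ∀ m : MetricSpace X, m.toUniformSpace.toTopologicalSpace = tX →
    ExpansiveWith φ (fun x y => @dist X m.toDist x y)

/-- The extension of an action to the one-point compactification, fixing the point
at infinity. -/
def onePointExt {G X : Type*} (φ : G → X → X) (g : G) : OnePoint X → OnePoint X :=
  Option.map (φ g)

/-!
If `d'` is a compatible metric on `X' = X ∪ {∞}`, its restriction to `X` is compatible, so MIE
gives an expansive constant `c` on `X`. At most one point of `X` keeps its whole orbit within
`c / 2` of `∞` (two such points would stay `c`-close), and some image of that point lies at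
positive distance from `∞`; hence orbits of points of `X` leave a fixed neighbourhood of `∞`.

Conversely, if `φ'` is expansive with constant `c` for `d'`, the pairs with `c ≤ d' a b` form a
compact subset of `X' × X'` off the diagonal. Near each of its points a compatible metric `d` on
`X` is bounded below (near `(x, ∞)` because `X` minus a compact ball around `x` is a
neighbourhood of `∞`), so by compactness `d` is bounded below on all of it.
-/

open Set Metric Topology TopologicalSpace OnePoint

theorem OnePoint.secondCountableTopology {X : Type*} [TopologicalSpace X] [T2Space X]
    [SecondCountableTopology X] [WeaklyLocallyCompactSpace X] :
    SecondCountableTopology (OnePoint X) := by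
  obtain ⟨b, hbc, -, hb⟩ := exists_countable_basis X
  let K := CompactExhaustion.choice X
  refine IsTopologicalBasis.secondCountableTopology
    (b := ((↑) '' ·) '' b ∪ range fun n => ((↑) '' K n)ᶜ) ?_
    ((hbc.image _).union (countable_range _))
  refine isTopologicalBasis_of_isOpen_of_nhds ?_ fun a u ha hu => ?_
  · rintro _ (⟨s, hs, rfl⟩ | ⟨n, rfl⟩)
    · exact isOpen_image_coe.2 (hb.isOpen hs)
    · exact isOpen_compl_image_coe.2 ⟨(K.isCompact n).isClosed, K.isCompact n⟩
  induction a using OnePoint.rec with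
  | infty =>
    obtain ⟨s, ⟨-, hs⟩, hsu⟩ := hasBasis_nhds_infty.mem_iff.1 (hu.mem_nhds ha)
    obtain ⟨n, hn⟩ := K.exists_superset_of_isCompact hs
    rw [← compl_image_coe] at hsu
    exact ⟨_, Or.inr ⟨n, rfl⟩, infty_notMem_image_coe,
      (compl_subset_compl.2 (image_mono hn)).trans hsu⟩
  | coe x =>
    obtain ⟨s, hs, hxs, hsu⟩ := hb.exists_subset_of_mem_open ha (hu.preimage continuous_coe)
    exact ⟨_, Or.inl ⟨s, hs, rfl⟩, mem_image_of_mem _ hxs, image_subset_iff.2 hsu⟩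

theorem OnePoint.metrizableSpace {X : Type*} [TopologicalSpace X] [MetrizableSpace X]
    [LocallyCompactSpace X] [SigmaCompactSpace X] : MetrizableSpace (OnePoint X) := by
  let _ := metrizableSpaceMetric X
  have _ := OnePoint.secondCountableTopology (X := X)
  infer_instance

theorem Topology.IsEmbedding.metricSpaceInduced_toTopologicalSpace {X Y : Type*}
    [tX : TopologicalSpace X] [tY : TopologicalSpace Y] {f : X → Y} (hf : IsEmbedding f)
    (m : MetricSpace Y) (hm : m.toUniformSpace.toTopologicalSpace = tY) :
    (MetricSpace.induced f hf.injective m).toUniformSpace.toTopologicalSpace = tX := by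
  subst hm
  exact hf.eq_induced.symm

theorem isCompact_setOf_le_dist {Y : Type*} [t : TopologicalSpace Y] [CompactSpace Y]
    (m : MetricSpace Y) (hm : m.toUniformSpace.toTopologicalSpace = t) (c : ℝ) :
    IsCompact {p : Y × Y | c ≤ @dist Y m.toDist p.1 p.2} := by
  subst hm
  let _ := m
  exact (isClosed_le continuous_const continuous_dist).isCompact

section ExpansiveExtension

variable {G X : Type*} [MetricSpace (OnePoint X)] {φ : G → X → X} {c : ℝ}

theorem eq_of_forall_dist_infty_le
    (hexp : ∀ x y : X, x ≠ y → ∃ g, c < dist (φ g x : OnePoint X) (φ g y)) {x y : X}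
    (hx : ∀ g, dist (φ g x : OnePoint X) ∞ ≤ c / 2)
    (hy : ∀ g, dist (φ g y : OnePoint X) ∞ ≤ c / 2) : x = y := by
  by_contra hxy
  obtain ⟨g, hg⟩ := hexp x y hxy
  linarith [hx g, hy g, dist_triangle_right (φ g x : OnePoint X) (φ g y) ∞]

theorem exists_pos_forall_exists_lt_dist_infty [Nonempty G] (hc : 0 < c)
    (hexp : ∀ x y : X, x ≠ y → ∃ g, c < dist (φ g x : OnePoint X) (φ g y)) :
    ∃ ε > 0, ∀ x : X, ∃ g, ε < dist (φ g x : OnePoint X) ∞ := by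
  by_contra! h
  obtain ⟨x₁, hx₁⟩ := h (c / 2) (half_pos hc)
  let g₀ := Classical.arbitrary G
  have hδ : 0 < dist (φ g₀ x₁ : OnePoint X) ∞ := dist_pos.2 (coe_ne_infty _)
  obtain ⟨x₂, hx₂⟩ := h (min (c / 2) (dist (φ g₀ x₁ : OnePoint X) ∞ / 2)) (by positivity)
  obtain rfl : x₂ = x₁ :=
    eq_of_forall_dist_infty_le hexp (fun g => (hx₂ g).trans (min_le_left _ _)) hx₁
  linarith [(hx₂ g₀).trans (min_le_right _ _)]

theorem expansiveWith_onePointExt [Nonempty G] (hc : 0 < c)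
    (hexp : ∀ x y : X, x ≠ y → ∃ g, c < dist (φ g x : OnePoint X) (φ g y)) :
    ExpansiveWith (onePointExt φ) dist := by
  obtain ⟨ε, hε, hfar⟩ := exists_pos_forall_exists_lt_dist_infty hc hexp
  refine ⟨min c ε, lt_min hc hε, fun a b hab => ?_⟩
  induction a using OnePoint.rec with
  | infty =>
    induction b using OnePoint.rec with
    | infty => exact absurd rfl hab
    | coe y =>
      obtain ⟨g, hg⟩ := hfar y
      exact ⟨g, (min_le_right _ _).trans_lt (dist_comm (∞ : OnePoint X) _ ▸ hg)⟩
  | coe x =>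
    induction b using OnePoint.rec with
    | infty =>
      obtain ⟨g, hg⟩ := hfar x
      exact ⟨g, (min_le_right _ _).trans_lt hg⟩
    | coe y =>
      obtain ⟨g, hg⟩ := hexp x y (coe_injective.ne_iff.1 hab)
      exact ⟨g, (min_le_left _ _).trans_lt hg⟩

end ExpansiveExtension

theorem MIE.onePointExt {G X : Type*} [Nonempty G] [TopologicalSpace X] {φ : G → X → X}
    (h : MIE φ) : MIE (onePointExt φ) := by
  intro m hm
  let _ := m
  obtain ⟨c, hc, hexp⟩ :=
    h _ (isOpenEmbedding_coe.isEmbedding.metricSpaceInduced_toTopologicalSpace m hm)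
  exact expansiveWith_onePointExt hc hexp

section LowerBound

variable {X : Type*} [MetricSpace X] [WeaklyLocallyCompactSpace X]

theorem exists_isCompact_closedBall_notMem_image_coe (x₀ : X) {b : OnePoint X}
    (hb : b ≠ x₀) :
    ∃ ρ > 0, IsCompact (closedBall x₀ ρ) ∧ b ∉ ((↑) : X → OnePoint X) '' closedBall x₀ ρ := by
  obtain ⟨ρ₀, hρ₀, hK⟩ := exists_isCompact_closedBall x₀
  induction b using OnePoint.rec with
  | infty => exact ⟨ρ₀, hρ₀, hK, infty_notMem_image_coe⟩
  | coe y =>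
    have hy : 0 < dist y x₀ := dist_pos.2 (coe_injective.ne_iff.1 hb)
    refine ⟨min ρ₀ (dist y x₀ / 2), by positivity,
      hK.of_isClosed_subset isClosed_closedBall (closedBall_subset_closedBall (min_le_left _ _)),
      fun hyK => ?_⟩
    have := (min_le_right _ _).trans' (mem_closedBall.1 (coe_injective.mem_set_image.1 hyK))
    linarith

theorem exists_nhds_coe_pos_le_dist (x₀ : X) {b : OnePoint X} (hb : b ≠ x₀) :
    ∃ U ∈ 𝓝 (x₀ : OnePoint X), ∃ V ∈ 𝓝 b, ∃ r > 0,
      ∀ x y : X, (x : OnePoint X) ∈ U → (y : OnePoint X) ∈ V → r ≤ dist x y := by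
  obtain ⟨ρ, hρ, hK, hbK⟩ := exists_isCompact_closedBall_notMem_image_coe x₀ hb
  refine ⟨(↑) '' ball x₀ (ρ / 2), (isOpen_image_coe.2 isOpen_ball).mem_nhds
      (mem_image_of_mem _ (mem_ball_self (half_pos hρ))),
    ((↑) '' closedBall x₀ ρ)ᶜ, (isOpen_compl_image_coe.2 ⟨isClosed_closedBall, hK⟩).mem_nhds hbK,
    ρ / 2, half_pos hρ, fun x y hx hy => ?_⟩
  have hx : dist x x₀ < ρ / 2 := mem_ball.1 (coe_injective.mem_set_image.1 hx)
  have hy : ρ < dist y x₀ := not_le.1 fun h => hy (mem_image_of_mem _ h)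
  linarith [dist_triangle_left y x₀ x]

theorem exists_nhds_pos_le_dist {a b : OnePoint X} (hab : a ≠ b) :
    ∃ t ∈ 𝓝 (a, b), ∃ r > 0,
      ∀ x y : X, ((x : OnePoint X), (y : OnePoint X)) ∈ t → r ≤ dist x y := by
  induction a using OnePoint.rec with
  | infty =>
    induction b using OnePoint.rec with
    | infty => exact absurd rfl hab
    | coe y₀ =>
      obtain ⟨U, hU, V, hV, r, hr, h⟩ := exists_nhds_coe_pos_le_dist y₀ hab
      exact ⟨V ×ˢ U, prod_mem_nhds hV hU, r, hr,
        fun x y hxy => dist_comm y x ▸ h y x hxy.2 hxy.1⟩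
  | coe x₀ =>
    obtain ⟨U, hU, V, hV, r, hr, h⟩ := exists_nhds_coe_pos_le_dist x₀ hab.symm
    exact ⟨U ×ˢ V, prod_mem_nhds hU hV, r, hr, fun x y hxy => h x y hxy.1 hxy.2⟩

theorem exists_pos_le_dist_of_isCompact {K : Set (OnePoint X × OnePoint X)} (hK : IsCompact K)
    (hKdiag : ∀ p ∈ K, p.1 ≠ p.2) :
    ∃ r > 0, ∀ x y : X, ((x : OnePoint X), (y : OnePoint X)) ∈ K → r ≤ dist x y := by
  refine hK.induction_on ⟨1, one_pos, fun _ _ h => h.elim⟩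
    (fun s t hst ⟨r, hr, h⟩ => ⟨r, hr, fun x y hxy => h x y (hst hxy)⟩)
    (fun s t ⟨r, hr, h⟩ ⟨r', hr', h'⟩ => ⟨min r r', lt_min hr hr', fun x y hxy => ?_⟩)
    (fun p hp => ?_)
  · exact hxy.elim (fun hs => (min_le_left _ _).trans (h x y hs))
      (fun ht => (min_le_right _ _).trans (h' x y ht))
  · obtain ⟨t, ht, hbound⟩ := exists_nhds_pos_le_dist (hKdiag p hp)
    exact ⟨t, mem_nhdsWithin_of_mem_nhds ht, hbound⟩

end LowerBound

theorem mie_of_expansiveWith_onePointExt {G X : Type*} [TopologicalSpace X]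
    [WeaklyLocallyCompactSpace X] {φ : G → X → X} (m : MetricSpace (OnePoint X))
    (hm : m.toUniformSpace.toTopologicalSpace = (inferInstance : TopologicalSpace (OnePoint X)))
    (h : ExpansiveWith (onePointExt φ) fun a b => @dist (OnePoint X) m.toDist a b) :
    MIE φ := by
  intro mX hmX
  subst hmX
  let _ := mX
  obtain ⟨c, hc, hexp⟩ := h
  obtain ⟨r, hr, hbound⟩ := exists_pos_le_dist_of_isCompact (isCompact_setOf_le_dist m hm c)
    fun p hp hdiag => by
      rw [mem_ofPred_eq, hdiag, @dist_self _ m.toPseudoMetricSpace] at hp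
      linarith
  refine ⟨r / 2, half_pos hr, fun x y hxy => ?_⟩
  obtain ⟨g, hg⟩ := hexp x y (coe_injective.ne hxy)
  exact ⟨g, (half_lt_self hr).trans_le (hbound _ _ hg.le)⟩

theorem mie_iff_onePoint_expansive {G X : Type*} [Group G] [TopologicalSpace X]
    [TopologicalSpace.MetrizableSpace X] [LocallyCompactSpace X] [SigmaCompactSpace X]
    (φ : G → X → X) :
    (MIE φ ↔
      ∃ m : MetricSpace (OnePoint X),
        m.toUniformSpace.toTopologicalSpace = (inferInstance : TopologicalSpace (OnePoint X)) ∧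
        ExpansiveWith (onePointExt φ) (fun a b => @dist (OnePoint X) m.toDist a b)) ∧
    (MIE φ ↔ MIE (onePointExt φ)) := by
  have _ := OnePoint.metrizableSpace (X := X)
  obtain ⟨m₀, hm₀⟩ : ∃ m : MetricSpace (OnePoint X),
      m.toUniformSpace.toTopologicalSpace = (inferInstance : TopologicalSpace (OnePoint X)) :=
    ⟨metrizableSpaceMetric _, rfl⟩
  exact ⟨⟨fun h => ⟨m₀, hm₀, h.onePointExt m₀ hm₀⟩,
      fun ⟨m, hm, h⟩ => mie_of_expansiveWith_onePointExt m hm h⟩,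
    ⟨MIE.onePointExt, fun h => mie_of_expansiveWith_onePointExt m₀ hm₀ (h m₀ hm₀)⟩⟩
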